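/- arXiv:math/0702391 — 2 statements merged into one kernel-verified Lean document; each statement's English description precedes it below -/
import Mathlib

section
/- Kac's formula for conditional expectation: Let P be a probability measure preserved by a measurable bijection θ, and B ∈ 𝒜 with P(B) > 0. Then E[T_B · 1_B] = P(T̃_B < ∞), and consequently E[T_B | B] = 1 / P(B | T̃_B < ∞). -/
open MeasureTheory
open scoped ENNReal Classical
noncomputable section

/-- First hitting time `inf {n ≥ 1 : θ^n ω ∈ B}` valued in `ℕ∞` (`⊤` if never). -/
def hitT {Ω : Type*} (θ : Ω → Ω) (B : Set Ω) (ω : Ω) : ℕ∞ :=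
  ⨅ (n : ℕ) (_ : 0 < n ∧ θ^[n] ω ∈ B), (n : ℕ∞)

/-- Number of visits to `A` strictly before the hitting time of `B` (in `[0,∞]`). -/
def countM {Ω : Type*} (θ : Ω → Ω) (B A : Set Ω) (ω : Ω) : ℝ≥0∞ :=
  ∑' n : ℕ, if (n : ℕ∞) < hitT θ B ω ∧ θ^[n] ω ∈ A then 1 else 0

lemma hitT_gt_iff {Ω : Type*} (f : Ω → Ω) (B : Set Ω) (ω : Ω) (k : ℕ) :
    (k : ℕ∞) < hitT f B ω ↔ ∀ n : ℕ, 0 < n → n ≤ k → f^[n] ω ∉ B := by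
  constructor
  · intro h n hn hnk hmem
    have h1 : hitT f B ω ≤ (n : ℕ∞) := iInf₂_le n ⟨hn, hmem⟩
    have h2 : (n : ℕ∞) ≤ (k : ℕ∞) := by exact_mod_cast hnk
    exact absurd (h1.trans h2) (not_le.mpr h)
  · intro h
    have : ((k+1 : ℕ) : ℕ∞) ≤ hitT f B ω := by
      refine le_iInf₂ fun n hn => ?_
      have : ¬ n ≤ k := fun hle => h n hn.1 hle hn.2
      exact_mod_cast Nat.succ_le_of_lt (not_le.mp this)
    exact lt_of_lt_of_le (by exact_mod_cast Nat.lt_succ_self k) this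

lemma hitT_lt_top_iff {Ω : Type*} (f : Ω → Ω) (B : Set Ω) (ω : Ω) :
    hitT f B ω < ⊤ ↔ ∃ n : ℕ, 0 < n ∧ f^[n] ω ∈ B := by
  constructor
  · intro h
    by_contra hc
    push_neg at hc
    have : hitT f B ω = ⊤ :=
      iInf_eq_top.mpr fun n => iInf_eq_top.mpr fun hn => absurd hn.2 (hc n hn.1)
    simp [this] at h
  · rintro ⟨n, hn, hmem⟩
    exact lt_of_le_of_lt (iInf₂_le n ⟨hn, hmem⟩) (by exact_mod_cast WithTop.coe_lt_top n)

lemma gtSet_eq {Ω : Type*} (f : Ω → Ω) (B : Set Ω) (k : ℕ) :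
    {ω | (k : ℕ∞) < hitT f B ω} = ⋂ (n : ℕ) (_ : 0 < n ∧ n ≤ k), (f^[n]) ⁻¹' Bᶜ := by
  ext ω
  simp only [Set.mem_setOf_eq, hitT_gt_iff, Set.mem_iInter, Set.mem_preimage, Set.mem_compl_iff]
  exact ⟨fun h n hn => h n hn.1 hn.2, fun h n h1 h2 => h n ⟨h1, h2⟩⟩

lemma measurable_gtSet {Ω : Type*} [MeasurableSpace Ω] {f : Ω → Ω} (hf : Measurable f)
    {B : Set Ω} (hB : MeasurableSet B) (k : ℕ) :
    MeasurableSet {ω | (k : ℕ∞) < hitT f B ω} := by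
  rw [gtSet_eq]
  exact MeasurableSet.iInter fun n => MeasurableSet.iInter fun _ => (hf.iterate n) hB.compl

lemma enat_tsum_indicator (m : ℕ∞) :
    ∑' k : ℕ, (if (k : ℕ∞) < m then (1:ℝ≥0∞) else 0) = (m : ℝ≥0∞) := by
  induction m using ENat.recTopCoe with
  | top =>
    have : ∀ k : ℕ, (if (k : ℕ∞) < ⊤ then (1:ℝ≥0∞) else 0) = 1 := fun k =>
      if_pos (by exact_mod_cast WithTop.coe_lt_top k)
    rw [tsum_congr this]
    simp [ENNReal.tsum_const_eq_top_of_ne_zero one_ne_zero]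
  | coe n =>
    rw [tsum_eq_sum (s := Finset.range n) (fun b hb => by
      rw [if_neg]
      simp only [Finset.mem_range, not_lt] at hb
      exact fun h => absurd (by exact_mod_cast h) (not_lt.mpr hb))]
    have : ∀ b ∈ Finset.range n, (if (b : ℕ∞) < (n : ℕ∞) then (1:ℝ≥0∞) else 0) = 1 := by
      intro b hb
      rw [if_pos (by exact_mod_cast Finset.mem_range.mp hb)]
    rw [Finset.sum_congr rfl this]
    simp

lemma iterate_cancel {Ω : Type*} (θ : Ω ≃ Ω) (n m : ℕ) (h : n ≤ m) (ω : Ω) :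
    (⇑θ)^[n] ((⇑θ.symm)^[m] ω) = (⇑θ.symm)^[m - n] ω := by
  obtain ⟨d, rfl⟩ : ∃ d, m = n + d := ⟨m - n, by omega⟩
  rw [Nat.add_sub_cancel_left, Function.iterate_add_apply]
  exact Function.LeftInverse.iterate (fun x => θ.apply_symm_apply x) n _

lemma symm_preimage_measure {Ω : Type*} [MeasurableSpace Ω] (θ : Ω ≃ Ω)
    (hθ' : Measurable ⇑θ.symm) (P : Measure Ω)
    (hinv : ∀ A : Set Ω, MeasurableSet A → P (⇑θ ⁻¹' A) = P A)
    (A : Set Ω) (hA : MeasurableSet A) : P (⇑θ.symm ⁻¹' A) = P A := by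
  have h1 := hinv (⇑θ.symm ⁻¹' A) (hθ' hA)
  have h2 : ⇑θ ⁻¹' (⇑θ.symm ⁻¹' A) = A := by
    ext x; simp [Set.mem_preimage]
  rw [h2] at h1
  exact h1.symm

lemma symm_iterate_preimage_measure {Ω : Type*} [MeasurableSpace Ω] (θ : Ω ≃ Ω)
    (hθ' : Measurable ⇑θ.symm) (P : Measure Ω)
    (hinv : ∀ A : Set Ω, MeasurableSet A → P (⇑θ ⁻¹' A) = P A)
    (m : ℕ) (A : Set Ω) (hA : MeasurableSet A) : P ((⇑θ.symm)^[m] ⁻¹' A) = P A := by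
  induction m with
  | zero => simp
  | succ m ih =>
    have h : (⇑θ.symm)^[m + 1] ⁻¹' A = ⇑θ.symm ⁻¹' ((⇑θ.symm)^[m] ⁻¹' A) := by
      rw [Function.iterate_succ]; rfl
    rw [h, symm_preimage_measure θ hθ' P hinv _ ((hθ'.iterate m) hA)]
    exact ih

lemma S_mem_iff {Ω : Type*} (θ : Ω ≃ Ω) (B : Set Ω) (k : ℕ) (ω : Ω) :
    ω ∈ (⇑θ.symm)^[k+1] ⁻¹' (B ∩ {ω' | (k:ℕ∞) < hitT ⇑θ B ω'}) ↔
      (⇑θ.symm)^[k+1] ω ∈ B ∧ ∀ i : ℕ, 0 < i → i ≤ k → (⇑θ.symm)^[i] ω ∉ B := by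
  simp only [Set.mem_preimage, Set.mem_inter_iff, Set.mem_setOf_eq, hitT_gt_iff]
  constructor
  · rintro ⟨hb, h⟩
    refine ⟨hb, fun i hi hik hmem => ?_⟩
    have hcalc : (⇑θ)^[k+1-i] ((⇑θ.symm)^[k+1] ω) = (⇑θ.symm)^[i] ω := by
      rw [iterate_cancel θ (k+1-i) (k+1) (by omega) ω]
      congr 1; omega
    exact h (k+1-i) (by omega) (by omega) (hcalc ▸ hmem)
  · rintro ⟨hb, h⟩
    refine ⟨hb, fun n hn hnk hmem => ?_⟩
    have hcalc : (⇑θ)^[n] ((⇑θ.symm)^[k+1] ω) = (⇑θ.symm)^[k+1-n] ω :=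
      iterate_cancel θ n (k+1) (by omega) ω
    exact h (k+1-n) (by omega) (by omega) (hcalc ▸ hmem)

lemma union_S {Ω : Type*} (θ : Ω ≃ Ω) (B : Set Ω) :
    (⋃ k : ℕ, (⇑θ.symm)^[k+1] ⁻¹' (B ∩ {ω' | (k:ℕ∞) < hitT ⇑θ B ω'}))
      = {ω | hitT (⇑θ.symm) B ω < ⊤} := by
  ext ω
  simp only [Set.mem_iUnion, Set.mem_setOf_eq, hitT_lt_top_iff]
  constructor
  · rintro ⟨k, hk⟩
    rw [S_mem_iff] at hk
    exact ⟨k+1, Nat.succ_pos k, hk.1⟩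
  · rintro ⟨n, hn, hmem⟩
    have hex : ∃ j : ℕ, (⇑θ.symm)^[j+1] ω ∈ B := ⟨n-1, by
      have : n - 1 + 1 = n := by omega
      rw [this]; exact hmem⟩
    refine ⟨Nat.find hex, (S_mem_iff θ B _ ω).mpr ⟨Nat.find_spec hex, fun i hi hik hmem' => ?_⟩⟩
    refine Nat.find_min hex (show i - 1 < Nat.find hex by omega) ?_
    have : i - 1 + 1 = i := by omega
    rw [this]; exact hmem'

lemma disj_S {Ω : Type*} (θ : Ω ≃ Ω) (B : Set Ω) :
    Pairwise (Function.onFun Disjoint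
      fun k : ℕ => (⇑θ.symm)^[k+1] ⁻¹' (B ∩ {ω' | (k:ℕ∞) < hitT ⇑θ B ω'})) := by
  intro k l hkl
  rw [Function.onFun, Set.disjoint_left]
  intro ω h1 h2
  rw [S_mem_iff] at h1 h2
  rcases Nat.lt_or_ge k l with h | h
  · exact h2.2 (k+1) (by omega) (by omega) h1.1
  · exact h1.2 (l+1) (by omega) (by omega) h2.1

/-- Kac's formula: `E[T_B 1_B] = P(T̃_B < ∞)` and `E[T_B | B] = 1 / P(B | T̃_B < ∞)`. -/
theorem kac_conditional {Ω : Type*} [MeasurableSpace Ω]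
    (θ : Ω ≃ Ω) (hθ : Measurable θ) (hθ' : Measurable θ.symm)
    (P : Measure Ω) [IsProbabilityMeasure P]
    (hinv : ∀ A : Set Ω, MeasurableSet A → P (⇑θ ⁻¹' A) = P A)
    (B : Set Ω) (hB : MeasurableSet B) (hpos : 0 < P B) :
    (∫⁻ ω in B, (hitT (⇑θ) B ω : ℝ≥0∞) ∂P = P {ω | hitT (⇑θ.symm) B ω < ⊤}) ∧
    (∫⁻ ω in B, (hitT (⇑θ) B ω : ℝ≥0∞) ∂P) / P B
      = 1 / (P (B ∩ {ω | hitT (⇑θ.symm) B ω < ⊤}) / P {ω | hitT (⇑θ.symm) B ω < ⊤}) := by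
  set Sinf := {ω | hitT (⇑θ.symm) B ω < ⊤} with hSinf
  have hSmeas : ∀ k : ℕ,
      MeasurableSet ((⇑θ.symm)^[k+1] ⁻¹' (B ∩ {ω' | (k:ℕ∞) < hitT ⇑θ B ω'})) :=
    fun k => (hθ'.iterate (k+1)) (hB.inter (measurable_gtSet hθ hB k))
  have hSinfMeas : MeasurableSet Sinf := by
    rw [hSinf, ← union_S θ B]; exact MeasurableSet.iUnion hSmeas
  have h1 : ∫⁻ ω in B, (hitT (⇑θ) B ω : ℝ≥0∞) ∂P = P Sinf := by
    have hpt : ∀ ω, (hitT (⇑θ) B ω : ℝ≥0∞)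
        = ∑' k : ℕ, Set.indicator {ω' | (k:ℕ∞) < hitT ⇑θ B ω'} (1 : Ω → ℝ≥0∞) ω := by
      intro ω
      rw [← enat_tsum_indicator (hitT ⇑θ B ω)]
      exact tsum_congr fun k => by
        simp [Set.indicator_apply, Set.mem_setOf_eq]
    calc ∫⁻ ω in B, (hitT (⇑θ) B ω : ℝ≥0∞) ∂P
        = ∫⁻ ω in B, ∑' k : ℕ, Set.indicator {ω' | (k:ℕ∞) < hitT ⇑θ B ω'} (1 : Ω → ℝ≥0∞) ω ∂P :=
          lintegral_congr fun ω => hpt ω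
      _ = ∑' k : ℕ, ∫⁻ ω in B, Set.indicator {ω' | (k:ℕ∞) < hitT ⇑θ B ω'} (1 : Ω → ℝ≥0∞) ω ∂P :=
          lintegral_tsum fun k =>
            ((measurable_const.indicator (measurable_gtSet hθ hB k))).aemeasurable
      _ = ∑' k : ℕ, P ({ω' | (k:ℕ∞) < hitT ⇑θ B ω'} ∩ B) := by
          refine tsum_congr fun k => ?_
          rw [lintegral_indicator_one (measurable_gtSet hθ hB k),
            Measure.restrict_apply (measurable_gtSet hθ hB k)]
      _ = ∑' k : ℕ, P ((⇑θ.symm)^[k+1] ⁻¹' (B ∩ {ω' | (k:ℕ∞) < hitT ⇑θ B ω'})) := by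
          refine tsum_congr fun k => ?_
          rw [symm_iterate_preimage_measure θ hθ' P hinv (k+1) _
            (hB.inter (measurable_gtSet hθ hB k)), Set.inter_comm]
      _ = P (⋃ k : ℕ, (⇑θ.symm)^[k+1] ⁻¹' (B ∩ {ω' | (k:ℕ∞) < hitT ⇑θ B ω'})) :=
          (measure_iUnion (disj_S θ B) hSmeas).symm
      _ = P Sinf := by rw [union_S]
  have hmp : MeasurePreserving (⇑θ.symm) P P :=
    ⟨hθ', Measure.ext fun A hA => by
      rw [Measure.map_apply hθ' hA, symm_preimage_measure θ hθ' P hinv A hA]⟩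
  have hzero : P {x ∈ B | ∀ m ≥ 1, (⇑θ.symm)^[m] x ∉ B} = 0 :=
    hmp.conservative.measure_mem_forall_ge_image_notMem_eq_zero hB.nullMeasurableSet 1
  have hdiff : P (B \ Sinf) = 0 := by
    refine measure_mono_null ?_ hzero
    rintro x ⟨hxB, hxS⟩
    refine ⟨hxB, fun m hm hmem => ?_⟩
    exact hxS (Set.mem_setOf.mpr ((hitT_lt_top_iff _ _ _).mpr ⟨m, hm, hmem⟩))
  have hBS : P (B ∩ Sinf) = P B := by
    have h := measure_inter_add_diff (μ := P) B hSinfMeas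
    rw [hdiff, add_zero] at h
    exact h
  refine ⟨h1, ?_⟩
  rw [h1, hBS, one_div, ENNReal.inv_div (Or.inl (measure_ne_top P Sinf)) (Or.inr hpos.ne')]
end
end

section
/- Exchange formula for countable Markov chains: For an irreducible positive recurrent Markov chain on a countable state space S, for all states a, b, c: E_b[Σ_{n=0}^{𝔱_b−1} 1(X_n = a)]/E_b[𝔱_b] = E_c[Σ_{n=0}^{𝔱_c−1} 1(X_n = a)]/E_c[𝔱_c]. -/
open scoped ENNReal Classical
noncomputable section

/-- `n`-step transition probabilities of the stochastic matrix `p`. -/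
def pPow {S : Type*} (p : S → S → ℝ≥0∞) : ℕ → S → S → ℝ≥0∞
  | 0, i, j => if i = j then 1 else 0
  | n + 1, i, j => ∑' k, pPow p n i k * p k j

/-- `i` and `j` communicate. -/
def Communicates {S : Type*} (p : S → S → ℝ≥0∞) (i j : S) : Prop :=
  (∃ n, 0 < pPow p n i j) ∧ (∃ n, 0 < pPow p n j i)

/-- `taboo p b n j = P_b(X_n = j, X_1 ≠ b, …, X_n ≠ b) = P_b(X_n = j, 𝔱_b > n)`. -/
def taboo {S : Type*} (p : S → S → ℝ≥0∞) (b : S) : ℕ → S → ℝ≥0∞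
  | 0, j => if j = b then 1 else 0
  | n + 1, j => if j = b then 0 else ∑' i, taboo p b n i * p i j

/-- `E_b[Σ_{n=0}^{𝔱_b−1} 1(X_n = a)]`. -/
def cycNum {S : Type*} (p : S → S → ℝ≥0∞) (b a : S) : ℝ≥0∞ := ∑' n, taboo p b n a

/-- `E_b[𝔱_b] = Σ_n P_b(𝔱_b > n)`. -/
def meanRet {S : Type*} (p : S → S → ℝ≥0∞) (b : S) : ℝ≥0∞ := ∑' n, ∑' j, taboo p b n j

/-- The cycle (occupation) measure `π^{(b)}`. -/
def cyc {S : Type*} (p : S → S → ℝ≥0∞) (b a : S) : ℝ≥0∞ := cycNum p b a / meanRet p b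


/-!
Write `μ_b = cycNum p b` for the expected occupation of each state during one excursion from `b`.
Finiteness of `E_b[𝔱_b]` forces `P_b(𝔱_b > n) → 0`, so the chain returns to `b` almost surely, and
this makes `μ_b` stationary. Every excessive measure `ν` dominates `ν b • μ_b`; the difference
`ν - ν b • μ_b` is again excessive and vanishes at `b`, hence everywhere by irreducibility. Applied
to `ν = μ_c` this gives `μ_c = μ_c(b) • μ_b`, so `E_c[𝔱_c] = μ_c(b) E_b[𝔱_b]`, and the factor
`μ_c(b)` cancels in the ratio.
-/

section

variable {S : Type*} {p : S → S → ℝ≥0∞} {b : S}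

theorem taboo_zero_of_ne {a : S} (h : a ≠ b) : taboo p b 0 a = 0 := if_neg h

theorem taboo_succ_self (n : ℕ) : taboo p b (n + 1) b = 0 := if_pos rfl

theorem taboo_succ_of_ne {a : S} (h : a ≠ b) (n : ℕ) :
    taboo p b (n + 1) a = ∑' i, taboo p b n i * p i a := if_neg h

theorem cycNum_self : cycNum p b b = 1 := by
  rw [cycNum, tsum_eq_single 0]
  · exact if_pos rfl
  · rintro (_ | n) h
    · exact absurd rfl h
    · exact taboo_succ_self n

theorem meanRet_eq_tsum_cycNum : meanRet p b = ∑' a, cycNum p b a :=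
  ENNReal.tsum_comm

theorem cycNum_ne_top (hfin : meanRet p b ≠ ⊤) (a : S) : cycNum p b a ≠ ⊤ :=
  ne_top_of_le_ne_top hfin (meanRet_eq_tsum_cycNum (p := p) ▸ ENNReal.le_tsum a)

variable (p) in
def IsExcessive (ν : S → ℝ≥0∞) : Prop := ∀ a, ∑' i, ν i * p i a ≤ ν a

section Excessive

variable {ν : S → ℝ≥0∞}

theorem IsExcessive.tsum_mul_pPow_le (hν : IsExcessive p ν) (n : ℕ) (a : S) :
    ∑' i, ν i * pPow p n i a ≤ ν a := by
  induction n generalizing a with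
  | zero => simp [pPow]
  | succ n ih =>
    calc ∑' i, ν i * pPow p (n + 1) i a
        = ∑' k, (∑' i, ν i * pPow p n i k) * p k a := by
          simp only [pPow, ← ENNReal.tsum_mul_left, ← ENNReal.tsum_mul_right, mul_assoc]
          exact ENNReal.tsum_comm
      _ ≤ ∑' k, ν k * p k a := by gcongr with k; exact ih k
      _ ≤ ν a := hν a

theorem IsExcessive.eq_zero_of_pPow_pos (hν : IsExcessive p ν) (hb : ν b = 0) {a : S} {n : ℕ}
    (hab : 0 < pPow p n a b) : ν a = 0 := by
  have h : ν a * pPow p n a b ≤ ν b := (ENNReal.le_tsum a).trans (hν.tsum_mul_pPow_le n b)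
  rw [hb, nonpos_iff_eq_zero, mul_eq_zero] at h
  exact h.resolve_right hab.ne'

theorem IsExcessive.mul_cycNum_le (hν : IsExcessive p ν) (a : S) :
    ν b * cycNum p b a ≤ ν a := by
  suffices h : ∀ N a, ν b * ∑ n ∈ Finset.range N, taboo p b n a ≤ ν a by
    rw [cycNum, ← ENNReal.tsum_mul_left]
    refine ENNReal.tsum_le_of_sum_range_le fun N => ?_
    rw [← Finset.mul_sum]
    exact h N a
  intro N
  induction N with
  | zero => simp
  | succ N ih =>
    intro a
    by_cases h : a = b
    · subst h
      calc ν a * ∑ n ∈ Finset.range (N + 1), taboo p a n a ≤ ν a * cycNum p a a := by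
            gcongr
            exact ENNReal.sum_le_tsum _
        _ = ν a := by rw [cycNum_self, mul_one]
    · calc ν b * ∑ n ∈ Finset.range (N + 1), taboo p b n a
          = ∑' i, (ν b * ∑ n ∈ Finset.range N, taboo p b n i) * p i a := by
            rw [Finset.sum_range_succ', taboo_zero_of_ne h, add_zero]
            simp only [taboo_succ_of_ne h, Finset.mul_sum, Finset.sum_mul, ← ENNReal.tsum_mul_left,
              mul_assoc]
            exact (Summable.tsum_finsetSum fun _ _ => ENNReal.summable).symm
        _ ≤ ∑' i, ν i * p i a := by gcongr with i; exact ih i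
        _ ≤ ν a := hν a

end Excessive

section Recurrence

variable (p b) in
/-- `P_b(𝔱_b = n + 1)`. -/
def firstReturn (n : ℕ) : ℝ≥0∞ := ∑' i, taboo p b n i * p i b

variable (hstoch : ∀ i, ∑' j, p i j = 1)
include hstoch

theorem firstReturn_add_tsum_taboo_succ (n : ℕ) :
    firstReturn p b n + ∑' j, taboo p b (n + 1) j = ∑' j, taboo p b n j := by
  calc firstReturn p b n + ∑' j, taboo p b (n + 1) j
      = ∑' j, ∑' i, taboo p b n i * p i j :=
        (ENNReal.tsum_eq_add_tsum_ite (f := fun j => ∑' i, taboo p b n i * p i j) b).symm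
    _ = ∑' i, taboo p b n i := by
        rw [ENNReal.tsum_comm]
        simp only [ENNReal.tsum_mul_left, hstoch, mul_one]

theorem sum_firstReturn_add_tsum_taboo (N : ℕ) :
    ∑ n ∈ Finset.range N, firstReturn p b n + ∑' j, taboo p b N j = 1 := by
  induction N with
  | zero => simp [taboo]
  | succ N ih =>
    rw [Finset.sum_range_succ, add_assoc, firstReturn_add_tsum_taboo_succ hstoch, ih]

theorem tsum_firstReturn_eq_one (hfin : meanRet p b ≠ ⊤) : ∑' n, firstReturn p b n = 1 := by
  refine le_antisymm ?_ ?_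
  · refine ENNReal.tsum_le_of_sum_range_le fun N => ?_
    rw [← sum_firstReturn_add_tsum_taboo hstoch N]
    exact le_self_add
  · have hsurvival : Filter.Tendsto (fun N => ∑' j, taboo p b N j) Filter.atTop (nhds 0) :=
      ENNReal.tendsto_atTop_zero_of_tsum_ne_top hfin
    have hbound (N : ℕ) : 1 ≤ ∑' n, firstReturn p b n + ∑' j, taboo p b N j := by
      rw [← sum_firstReturn_add_tsum_taboo hstoch N]
      gcongr
      exact ENNReal.sum_le_tsum _
    simpa using ge_of_tendsto' (tendsto_const_nhds.add hsurvival) hbound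

theorem tsum_cycNum_mul (hfin : meanRet p b ≠ ⊤) (a : S) :
    ∑' i, cycNum p b i * p i a = cycNum p b a := by
  have hswap : ∑' i, cycNum p b i * p i a = ∑' n, ∑' i, taboo p b n i * p i a := by
    rw [ENNReal.tsum_comm]
    simp only [cycNum, ENNReal.tsum_mul_right]
  rw [hswap]
  by_cases h : a = b
  · subst h
    exact (tsum_firstReturn_eq_one hstoch hfin).trans cycNum_self.symm
  · simp only [← taboo_succ_of_ne h]
    rw [cycNum, tsum_eq_zero_add' (f := fun n => taboo p b n a) ENNReal.summable,
      taboo_zero_of_ne h, zero_add]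

theorem isExcessive_cycNum (hfin : meanRet p b ≠ ⊤) : IsExcessive p (cycNum p b) :=
  fun a => (tsum_cycNum_mul hstoch hfin a).le

theorem IsExcessive.eq_mul_cycNum {ν : S → ℝ≥0∞} (hν : IsExcessive p ν) (hνb : ν b ≠ ⊤)
    (hfin : meanRet p b ≠ ⊤) (hlead : ∀ a, ∃ n, 0 < pPow p n a b) (a : S) :
    ν a = ν b * cycNum p b a := by
  have hexc : IsExcessive p fun a => ν a - ν b * cycNum p b a := by
    intro a
    have hsplit : ∑' i, (ν i - ν b * cycNum p b i) * p i a + ν b * cycNum p b a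
        = ∑' i, ν i * p i a := by
      rw [← tsum_cycNum_mul hstoch hfin a, ← ENNReal.tsum_mul_left, ← ENNReal.tsum_add]
      refine tsum_congr fun i => ?_
      rw [← mul_assoc, ← add_mul, tsub_add_cancel_of_le (hν.mul_cycNum_le i)]
    calc ∑' i, (ν i - ν b * cycNum p b i) * p i a
        = ∑' i, ν i * p i a - ν b * cycNum p b a :=
          ENNReal.eq_sub_of_add_eq (ENNReal.mul_ne_top hνb (cycNum_ne_top hfin a)) hsplit
      _ ≤ ν a - ν b * cycNum p b a := tsub_le_tsub_right (hν a) _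
  obtain ⟨n, hn⟩ := hlead a
  have hzero := hexc.eq_zero_of_pPow_pos (by simp [cycNum_self]) hn
  exact le_antisymm (tsub_eq_zero_iff_le.mp hzero) (hν.mul_cycNum_le a)

end Recurrence

end

theorem exchange_formula_general {S : Type*} (p : S → S → ℝ≥0∞)
    (hstoch : ∀ i, ∑' j, p i j = 1)
    (hirr : ∀ i j, Communicates p i j)
    (hposrec : ∀ b, meanRet p b < ⊤) :
    ∀ a b c, cycNum p b a / meanRet p b = cycNum p c a / meanRet p c := by
  intro a b c
  have hcyc (x : S) : cycNum p c x = cycNum p c b * cycNum p b x :=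
    (isExcessive_cycNum hstoch (hposrec c).ne).eq_mul_cycNum hstoch
      (cycNum_ne_top (hposrec c).ne b) (hposrec b).ne (fun y => (hirr y b).1) x
  have hmean : meanRet p c = cycNum p c b * meanRet p b := by
    rw [meanRet_eq_tsum_cycNum, meanRet_eq_tsum_cycNum, ← ENNReal.tsum_mul_left]
    exact tsum_congr hcyc
  have hcb : cycNum p c b ≠ 0 := by
    intro h
    simpa [cycNum_self, h] using hcyc c
  rw [hcyc a, hmean, ENNReal.mul_div_mul_left _ _ hcb (cycNum_ne_top (hposrec c).ne b)]

/-- Exchange formula: for an irreducible positive recurrent countable chain,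
`E_b[Σ_{n<𝔱_b} 1(X_n=a)]/E_b[𝔱_b] = E_c[Σ_{n<𝔱_c} 1(X_n=a)]/E_c[𝔱_c]`. -/
theorem exchange_formula {S : Type*} [Countable S] (p : S → S → ℝ≥0∞)
    (hstoch : ∀ i, ∑' j, p i j = 1)
    (hirr : ∀ i j, Communicates p i j)
    (hposrec : ∀ b, meanRet p b < ⊤) :
    ∀ a b c, cycNum p b a / meanRet p b = cycNum p c a / meanRet p c :=
  exchange_formula_general p hstoch hirr hposrec
end
end
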